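/- arXiv:2104.07943 — 2 statements merged into one kernel-verified Lean document; each statement's English description precedes it below -/
import Mathlib

section
/- Fix an integer d' ≥ 1, a real α > 1 and ε > 0. Let C = {(y₁, y') ∈ ℝ × ℝ^{d'} : |y'| < y₁^α, 0 < y₁ < ε}, and for h > 0 and (x₁, x') with 0 ≤ x₁ < ε and |x'| < x₁^α (or (x₁,x') = (0,0)) set W_h(x₁, x') = vol{(y₁,y') ∈ C : |y' − x'| < h and |y₁ − x₁| < h}. Then there exist c > 0 and h₀ > 0 such that for all h ∈ (0, h₀] and all such (x₁, x') with 0 ≤ x₁ < ε/2, one has W_h(x₁, x') ≥ c h^{α d' + 1}. -/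
open MeasureTheory Set Metric

noncomputable section

/-- Euclidean space `ℝ^n`. -/
abbrev Euc (n : ℕ) : Type := EuclideanSpace ℝ (Fin n)

theorem statement5 (d' : ℕ) (hd' : 1 ≤ d') (α ε : ℝ) (hα : 1 < α) (hε : 0 < ε) :
    ∃ c h₀ : ℝ, 0 < c ∧ 0 < h₀ ∧
      ∀ h ∈ Set.Ioc (0:ℝ) h₀, ∀ x₁ : ℝ, ∀ x' : Euc d',
        0 ≤ x₁ → x₁ < ε / 2 → (‖x'‖ < x₁ ^ α ∨ (x₁ = 0 ∧ x' = 0)) →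
        ENNReal.ofReal (c * h ^ (α * d' + 1)) ≤
          volume {y : ℝ × Euc d' |
            (‖y.2‖ < y.1 ^ α ∧ 0 < y.1 ∧ y.1 < ε) ∧ ‖y.2 - x'‖ < h ∧ |y.1 - x₁| < h} := by
  haveI : Nontrivial (Euc d') := by
    haveI : NeZero d' := ⟨by omega⟩
    infer_instance
  have hsup : ∀ a b : ℝ, 0 ≤ a → 0 ≤ b → a ^ α + b ^ α ≤ (a + b) ^ α := by
    intro a b ha hb
    have := NNReal.add_rpow_le_rpow_add a.toNNReal b.toNNReal hα.le
    have h2 : ((a.toNNReal ^ α + b.toNNReal ^ α : NNReal) : ℝ) ≤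
        (((a.toNNReal + b.toNNReal) ^ α : NNReal) : ℝ) := by exact_mod_cast this
    simpa [NNReal.coe_rpow, Real.coe_toNNReal _ ha, Real.coe_toNNReal _ hb,
      ← Real.toNNReal_add ha hb, sup_of_le_left (add_nonneg ha hb)] using h2
  set V := (volume (ball (0 : Euc d') 1)).toReal with hV
  have hVpos : 0 < V := ENNReal.toReal_pos
    (measure_ball_pos volume 0 one_pos).ne' measure_ball_lt_top.ne
  refine ⟨(1/2 : ℝ) ^ (α * d' + 1) * V, min 1 (ε/2), by positivity, by positivity, ?_⟩
  rintro h ⟨hh0, hh1⟩ x₁ x' hx1 hx2 hx3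
  set t := h / 2 with ht'
  have ht : 0 < t := by positivity
  have hα0 : (0:ℝ) < α := lt_trans one_pos hα
  have hh1' : h ≤ 1 := le_trans hh1 (min_le_left _ _)
  have hhε : h ≤ ε/2 := le_trans hh1 (min_le_right _ _)
  have hx'le : ‖x'‖ ≤ x₁ ^ α := by
    rcases hx3 with h1 | ⟨h1, h2⟩
    · exact h1.le
    · simp [h1, h2, Real.zero_rpow hα0.ne']
  have hsub : (Set.Ioo (x₁ + t) (x₁ + h)) ×ˢ (ball x' (t ^ α)) ⊆
      {y : ℝ × Euc d' |
        (‖y.2‖ < y.1 ^ α ∧ 0 < y.1 ∧ y.1 < ε) ∧ ‖y.2 - x'‖ < h ∧ |y.1 - x₁| < h} := by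
    rintro ⟨y₁, y'⟩ ⟨hy, hy3⟩
    obtain ⟨hy1, hy2⟩ := hy
    simp only [mem_ball, dist_eq_norm] at hy3
    have hy1' : 0 < y₁ := lt_of_le_of_lt (by positivity) hy1
    have htα : t ^ α ≤ t := by
      calc t ^ α ≤ t ^ (1:ℝ) := Real.rpow_le_rpow_of_exponent_ge ht (by linarith) hα.le
        _ = t := Real.rpow_one t
    refine ⟨⟨?_, hy1', by linarith⟩, by linarith [lt_of_lt_of_le hy3 htα], ?_⟩
    · calc ‖y'‖ ≤ ‖x'‖ + ‖y' - x'‖ := by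
            simpa using norm_add_le x' (y' - x')
        _ < x₁ ^ α + t ^ α := add_lt_add_of_le_of_lt hx'le hy3
        _ ≤ (x₁ + t) ^ α := hsup x₁ t hx1 ht.le
        _ < y₁ ^ α := Real.rpow_lt_rpow (by positivity) hy1 hα0
    · rw [abs_lt]; constructor <;> linarith
  refine le_trans ?_ (measure_mono hsub)
  rw [Measure.volume_eq_prod, Measure.prod_prod, Real.volume_Ioo,
    Measure.addHaar_ball volume x' (Real.rpow_nonneg ht.le α),
    finrank_euclideanSpace_fin]
  have hball : volume (ball (0 : Euc d') 1) = ENNReal.ofReal V := by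
    rw [hV, ENNReal.ofReal_toReal measure_ball_lt_top.ne]
  have e1 : ((t ^ α) ^ d') = t ^ (α * d') := by
    rw [← Real.rpow_natCast (t ^ α) d', ← Real.rpow_mul ht.le]
  have e2 : x₁ + h - (x₁ + t) = t := by rw [ht']; ring
  rw [e2, hball, ← ENNReal.ofReal_mul (by positivity),
    ← ENNReal.ofReal_mul ht.le]
  apply ENNReal.ofReal_le_ofReal
  have e3 : t ^ (α * (d':ℝ) + 1) = t ^ (α * (d':ℝ)) * t := by
    rw [Real.rpow_add ht, Real.rpow_one]
  have e4 : t ^ (α * (d':ℝ) + 1) = h ^ (α * (d':ℝ) + 1) * (1/2 : ℝ) ^ (α * (d':ℝ) + 1) := by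
    rw [show t = h * (1/2) by rw [ht']; ring]
    exact Real.mul_rpow hh0.le (by norm_num)
  rw [e1]
  calc (1/2 : ℝ) ^ (α * (d':ℝ) + 1) * V * h ^ (α * (d':ℝ) + 1)
      = t ^ (α * (d':ℝ) + 1) * V := by rw [e4]; ring
    _ = t * (t ^ (α * (d':ℝ)) * V) := by rw [e3]; ring
    _ ≤ t * (t ^ (α * (d':ℝ)) * V) := le_refl _
end
end

section
/- Let s > 1/2. There exists C > 0 such that for all parameters λ₁, λ', λ'' > 0 and every φ in the anisotropic Sobolev space H^s_λ(T^d) (λ = (λ₁,λ',λ'')) whose partial Fourier coefficient in x₁ at frequency 0 vanishes (F_{x₁}φ(0, x', x'') = 0), the trace γ_a^Π φ of φ on the hypersurface Σ_a = {x₁ = a} × T^{d−1} satisfies ‖γ_a^Π φ‖_{H^{s−1/2}_{λ',λ''}(Σ_a)} ≤ C λ₁^{−1/2} ‖φ‖_{H^s_λ(T^d)}. -/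
open MeasureTheory Set Metric Filter
open scoped ContDiff RealInnerProductSpace ENNReal Real

noncomputable section

instance : Fact ((0:ℝ) < 2) := ⟨by norm_num⟩

/-- The model coordinate space `ℝ × ℝ^{d'} × ℝ^{d''}`. -/
abbrev Coord (d' d'' : ℕ) : Type := ℝ × Euc d' × Euc d''

/-- The circle `ℝ/2ℤ`. -/
abbrev Circ : Type := AddCircle (2:ℝ)

/-- The torus `T^d = (ℝ/2ℤ)^d`, split as `T × T^{d'} × T^{d''}`. -/
abbrev Tor (d' d'' : ℕ) : Type := Circ × (Fin d' → Circ) × (Fin d'' → Circ)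

/-- The euclidean distance-to-zero of a tuple of circle points. -/
def tnorm {n : ℕ} (v : Fin n → Circ) : ℝ := Real.sqrt (∑ i, ‖v i‖ ^ 2)

/-- `V_{∞,d} = ∫_{T^d} 1_{|y₁|<1, |y'|<1, |y''|<1} dy`. -/
def Vinf (d' d'' : ℕ) : ℝ :=
  (volume {y : Tor d' d'' | ‖y.1‖ < 1 ∧ tnorm y.2.1 < 1 ∧ tnorm y.2.2 < 1}).toReal

/-- The Dirichlet form `Ē_{h̄,h̃,h}` of the Metropolis operator on the torus. -/
def torForm (d' d'' : ℕ) (hb ht h : ℝ) (g : Tor d' d'' → ℝ) : ℝ≥0∞ :=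
  ENNReal.ofReal (2 * Vinf d' d'' * hb * ht ^ d' * h ^ d'')⁻¹ *
    ∫⁻ x : Tor d' d'', ∫⁻ y : Tor d' d'',
      if ‖x.1 - y.1‖ < hb ∧ tnorm (x.2.1 - y.2.1) < ht ∧ tnorm (x.2.2 - y.2.2) < h
      then ENNReal.ofReal ((g x - g y) ^ 2) else 0

/-- The unnormalized character `e^{iπ k·x}` on the torus `(ℝ/2ℤ)^d`. -/
def eRaw (d' d'' : ℕ) (k : ℤ × (Fin d' → ℤ) × (Fin d'' → ℤ)) (x : Tor d' d'') : ℂ :=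
  fourier k.1 x.1 * (∏ i, fourier (k.2.1 i) (x.2.1 i)) * ∏ j, fourier (k.2.2 j) (x.2.2 j)

/-- The Fourier coefficient `F φ(k) = 2^{-d/2} ∫_{T^d} e^{-iπ⟨x,k⟩} φ(x) dx`. -/
def fCoeff (d' d'' : ℕ) (φ : Tor d' d'' → ℂ) (k : ℤ × (Fin d' → ℤ) × (Fin d'' → ℤ)) : ℂ :=
  (((2:ℝ) ^ (-(((1 + d' + d'' : ℕ)) : ℝ) / 2) : ℝ) : ℂ) *
    ∫ x : Tor d' d'', (starRingEnd ℂ) (eRaw d' d'' k x) * φ x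

/-- The quantity `⟨λ·k⟩² = 1 + |λ₁k₁|² + |λ'k'|² + |λ''k''|²`. -/
def brkt (d' d'' : ℕ) (lam1 lam' lam'' : ℝ) (k : ℤ × (Fin d' → ℤ) × (Fin d'' → ℤ)) : ℝ :=
  1 + (lam1 * k.1) ^ 2 + lam' ^ 2 * (∑ i, ((k.2.1 i : ℝ)) ^ 2) +
    lam'' ^ 2 * ∑ j, ((k.2.2 j : ℝ)) ^ 2

/-- The squared anisotropic Sobolev norm
`‖φ‖²_{H^s_λ(T^d)} = Σ_k ⟨λ·k⟩^{2s} |F φ(k)|²`. -/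
def sobNormSq (d' d'' : ℕ) (s lam1 lam' lam'' : ℝ) (φ : Tor d' d'' → ℂ) : ℝ≥0∞ :=
  ∑' k : ℤ × (Fin d' → ℤ) × (Fin d'' → ℤ),
    ENNReal.ofReal (brkt d' d'' lam1 lam' lam'' k ^ s) * (‖fCoeff d' d'' φ k‖₊ : ℝ≥0∞) ^ 2

/-- The Fourier coefficients (in `(x',x'')`) of the trace `γ_a^Π φ` of `φ` on the
hypersurface `Σ_a = {x₁ = a} × T^{d-1}`:
`F_{x',x''}(γ_a^Π φ)(k',k'') = (1/√2) Σ_{k₁} e^{iπ k₁ a} F φ(k₁,k',k'')`. -/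
def traceCoeff (d' d'' : ℕ) (a : ℝ) (φ : Tor d' d'' → ℂ)
    (kt : (Fin d' → ℤ) × (Fin d'' → ℤ)) : ℂ :=
  ((Real.sqrt 2)⁻¹ : ℝ) *
    ∑' k₁ : ℤ, Complex.exp (Real.pi * Complex.I * (k₁ : ℂ) * (a : ℂ)) *
      fCoeff d' d'' φ (k₁, kt.1, kt.2)

/-- The squared anisotropic Sobolev norm `‖γ_a^Π φ‖²_{H^{s-1/2}_{λ',λ''}(Σ_a)}`. -/
def traceNormSq (d' d'' : ℕ) (s lam' lam'' : ℝ) (a : ℝ) (φ : Tor d' d'' → ℂ) : ℝ≥0∞ :=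
  ∑' kt : (Fin d' → ℤ) × (Fin d'' → ℤ),
    ENNReal.ofReal
      ((1 + lam' ^ 2 * (∑ i, ((kt.1 i : ℝ)) ^ 2) + lam'' ^ 2 * ∑ j, ((kt.2 j : ℝ)) ^ 2) ^
        (s - 1 / 2)) *
      (‖traceCoeff d' d'' a φ kt‖₊ : ℝ≥0∞) ^ 2


/-!
Fix the tangential frequency `kt = (k', k'')` and put `M = ⟨(λ'k', λ''k'')⟩²`. Up to the factor
`1/√2` and unimodular phases, the trace coefficient at `kt` is the sum over `k₁` of the Fourier
coefficients of `φ`, and the `k₁ = 0` term vanishes by the mean-zero hypothesis. Cauchy–Schwarz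
with the weights `(M + λ₁²k₁²)^{∓s}` bounds its square by `Σ_{k₁ ≠ 0} (M + λ₁²k₁²)^{-s}` times the
`kt`-slice of `‖φ‖²_{H^s_λ}`. The integral test and the substitution `x = (√M/λ₁) u` bound that
lattice sum by `C λ₁⁻¹ M^{1/2-s}` with `C = 2 ∫_0^∞ (1 + u²)^{-s} du`, finite because `2s > 1`;
multiplying by `M^{s-1/2}` and summing over `kt` gives the estimate.
-/

section LatticeSum

variable {s M lam : ℝ}

lemma integrable_one_add_sq_rpow_neg (hs : 1 / 2 < s) :
    Integrable fun u : ℝ => (1 + u ^ 2) ^ (-s) := by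
  have h := integrable_rpow_neg_one_add_norm_sq (E := ℝ) (μ := volume) (r := 2 * s)
    (by simp; linarith)
  simpa only [Real.norm_eq_abs, sq_abs, show -(2 * s) / 2 = -s by ring] using h

def traceConst (s : ℝ) : ℝ := 2 * ∫ u in Ioi (0 : ℝ), (1 + u ^ 2) ^ (-s)

lemma traceConst_pos (hs : 1 / 2 < s) : 0 < traceConst s := by
  refine mul_pos two_pos ?_
  rw [setIntegral_pos_iff_support_of_nonneg_ae
    (Eventually.of_forall fun u => by positivity)
    (integrable_one_add_sq_rpow_neg hs).integrableOn]
  have hsupp : Function.support (fun u : ℝ => (1 + u ^ 2) ^ (-s)) = univ :=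
    eq_univ_of_forall fun u => Function.mem_support.mpr (by positivity)
  simp [hsupp]

lemma add_mul_sq_rpow_neg_eq (hM : 0 < M) (x : ℝ) :
    (M + (lam * x) ^ 2) ^ (-s) = M ^ (-s) * (1 + (lam / √M * x) ^ 2) ^ (-s) := by
  rw [← Real.mul_rpow hM.le (by positivity), div_mul_eq_mul_div, div_pow,
    Real.sq_sqrt hM.le, mul_add, mul_div_cancel₀ _ hM.ne', mul_one]

lemma integrable_add_mul_sq_rpow_neg (hs : 1 / 2 < s) (hM : 0 < M) (hlam : 0 < lam) :
    Integrable fun x : ℝ => (M + (lam * x) ^ 2) ^ (-s) := by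
  simp_rw [add_mul_sq_rpow_neg_eq hM]
  exact ((integrable_one_add_sq_rpow_neg hs).comp_mul_left' (by positivity)).const_mul _

lemma integral_Ioi_add_mul_sq_rpow_neg (hM : 0 < M) (hlam : 0 < lam) :
    ∫ x in Ioi (0 : ℝ), (M + (lam * x) ^ 2) ^ (-s) =
      lam⁻¹ * M ^ (1 / 2 - s) * ∫ u in Ioi (0 : ℝ), (1 + u ^ 2) ^ (-s) := by
  simp_rw [add_mul_sq_rpow_neg_eq hM]
  rw [integral_const_mul, integral_comp_mul_left_Ioi (fun u => (1 + u ^ 2) ^ (-s)) 0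
    (by positivity), mul_zero, smul_eq_mul, ← mul_assoc, inv_div, sub_eq_add_neg,
    Real.rpow_add hM, ← Real.sqrt_eq_rpow]
  ring

lemma antitoneOn_add_mul_sq_rpow_neg (hs : 0 ≤ s) (hM : 0 < M) (hlam : 0 < lam) :
    AntitoneOn (fun x : ℝ => (M + (lam * x) ^ 2) ^ (-s)) (Ici 0) := by
  intro x hx y hy hxy
  apply Real.rpow_le_rpow_of_nonpos (by positivity) _ (by linarith)
  gcongr
  exact mul_nonneg hlam.le hx

lemma tsum_add_mul_sq_rpow_neg_le (hs : 1 / 2 < s) (hM : 0 < M) (hlam : 0 < lam) :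
    ∑' n : ℕ, (M + (lam * (n + 1)) ^ 2) ^ (-s) ≤
      lam⁻¹ * M ^ (1 / 2 - s) * ∫ u in Ioi (0 : ℝ), (1 + u ^ 2) ^ (-s) := by
  rw [← integral_Ioi_add_mul_sq_rpow_neg hM hlam]
  exact_mod_cast (antitoneOn_add_mul_sq_rpow_neg (by linarith) hM hlam).tsum_add_one_le_integral
    (integrable_add_mul_sq_rpow_neg hs hM hlam).integrableOn fun x _ => by positivity

lemma tsum_int_ite_add_mul_sq_rpow_neg_le (hs : 1 / 2 < s) (hM : 0 < M) (hlam : 0 < lam) :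
    ∑' k : ℤ, (if k = 0 then 0 else ENNReal.ofReal ((M + (lam * k) ^ 2) ^ (-s))) ≤
      ENNReal.ofReal (traceConst s * lam⁻¹ * M ^ (1 / 2 - s)) := by
  have hanti := antitoneOn_add_mul_sq_rpow_neg (s := s) (by linarith) hM hlam
  have hsum : Summable fun n : ℕ => (M + (lam * (n + 1)) ^ 2) ^ (-s) := by
    exact_mod_cast (summable_nat_add_iff 1).mpr (hanti.summable_of_integrableOn_Ioi_zero
      (integrable_add_mul_sq_rpow_neg hs hM hlam).integrableOn fun x _ => by positivity)
  set F : ℤ → ℝ≥0∞ := fun k => if k = 0 then 0 else ENNReal.ofReal ((M + (lam * k) ^ 2) ^ (-s))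
  have hpos : ∀ n : ℕ, F ((n + 1 : ℕ) : ℤ) = ENNReal.ofReal ((M + (lam * (n + 1)) ^ 2) ^ (-s)) :=
    fun n => by
      simp only [F, if_neg (show ((n + 1 : ℕ) : ℤ) ≠ 0 by omega)]
      push_cast; rfl
  have hneg : ∀ n : ℕ, F (-(n + 1)) = ENNReal.ofReal ((M + (lam * (n + 1)) ^ 2) ^ (-s)) :=
    fun n => by
      simp only [F, if_neg (show -((n : ℤ) + 1) ≠ 0 by omega)]
      push_cast
      rw [mul_neg, neg_sq]
  show ∑' k, F k ≤ _
  rw [tsum_of_nat_of_neg_add_one ENNReal.summable ENNReal.summable,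
    tsum_eq_zero_add' ENNReal.summable]
  simp only [hpos, hneg]
  rw [show F ((0 : ℕ) : ℤ) = 0 from if_pos rfl, zero_add, ← two_mul,
    ← ENNReal.ofReal_tsum_of_nonneg (fun n => by positivity) hsum, ← ENNReal.ofReal_ofNat 2,
    ← ENNReal.ofReal_mul zero_le_two, traceConst]
  apply ENNReal.ofReal_le_ofReal
  linarith [tsum_add_mul_sq_rpow_neg_le hs hM hlam]

end LatticeSum

lemma ENNReal.sq_tsum_mul_le {ι : Type*} (u v : ι → ℝ≥0∞) :
    (∑' i, u i * v i) ^ 2 ≤ (∑' i, u i ^ 2) * ∑' i, v i ^ 2 := by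
  have h22 : Real.HolderConjugate 2 2 := by constructor <;> norm_num
  have hroot : ∑' i, u i * v i ≤
      (∑' i, u i ^ 2) ^ (1 / 2 : ℝ) * (∑' i, v i ^ 2) ^ (1 / 2 : ℝ) := by
    refine ENNReal.summable.tsum_le_of_sum_le fun t => ?_
    calc ∑ i ∈ t, u i * v i
        ≤ (∑ i ∈ t, u i ^ (2 : ℝ)) ^ (1 / 2 : ℝ) * (∑ i ∈ t, v i ^ (2 : ℝ)) ^ (1 / 2 : ℝ) :=
          ENNReal.inner_le_Lp_mul_Lq t u v h22
      _ ≤ (∑' i, u i ^ 2) ^ (1 / 2 : ℝ) * (∑' i, v i ^ 2) ^ (1 / 2 : ℝ) := by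
          simp only [ENNReal.rpow_two]
          gcongr <;> exact ENNReal.sum_le_tsum t
  calc (∑' i, u i * v i) ^ 2
      ≤ ((∑' i, u i ^ 2) ^ (1 / 2 : ℝ) * (∑' i, v i ^ 2) ^ (1 / 2 : ℝ)) ^ 2 := by gcongr
    _ = (∑' i, u i ^ 2) * ∑' i, v i ^ 2 := by
        rw [mul_pow, ← ENNReal.rpow_two, ← ENNReal.rpow_two, ← ENNReal.rpow_mul,
          ← ENNReal.rpow_mul]
        norm_num

lemma sq_tsum_le_of_apply_zero {s M lam : ℝ} (hs : 1 / 2 < s) (hM : 0 < M) (hlam : 0 < lam)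
    (c : ℤ → ℝ≥0∞) (hc0 : c 0 = 0) :
    (∑' k, c k) ^ 2 ≤ ENNReal.ofReal (traceConst s * lam⁻¹ * M ^ (1 / 2 - s)) *
      ∑' k : ℤ, ENNReal.ofReal ((M + (lam * k) ^ 2) ^ s) * c k ^ 2 := by
  set w : ℤ → ℝ := fun k => M + (lam * k) ^ 2
  have hw : ∀ k, 0 < w k := fun k => by positivity
  set u : ℤ → ℝ≥0∞ := fun k => if k = 0 then 0 else ENNReal.ofReal (w k ^ (-(s / 2)))
  set v : ℤ → ℝ≥0∞ := fun k => ENNReal.ofReal (w k ^ (s / 2)) * c k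
  have huv : ∀ k, u k * v k = c k := by
    intro k
    by_cases hk : k = 0
    · simp [u, v, hk, hc0]
    · simp only [u, v, if_neg hk]
      rw [← mul_assoc, ← ENNReal.ofReal_mul (by positivity), ← Real.rpow_add (hw k),
        neg_add_cancel, Real.rpow_zero, ENNReal.ofReal_one, one_mul]
  have hu : ∀ k, u k ^ 2 = if k = 0 then 0 else ENNReal.ofReal (w k ^ (-s)) := by
    intro k
    by_cases hk : k = 0
    · simp [u, hk]
    · simp only [u, if_neg hk]
      rw [← ENNReal.ofReal_pow (by positivity), ← Real.rpow_mul_natCast (hw k).le]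
      norm_num
  have hv : ∀ k, v k ^ 2 = ENNReal.ofReal (w k ^ s) * c k ^ 2 := by
    intro k
    rw [mul_pow, ← ENNReal.ofReal_pow (by positivity), ← Real.rpow_mul_natCast (hw k).le]
    norm_num
  calc (∑' k, c k) ^ 2 = (∑' k, u k * v k) ^ 2 := by simp only [huv]
    _ ≤ (∑' k, u k ^ 2) * ∑' k, v k ^ 2 := ENNReal.sq_tsum_mul_le u v
    _ ≤ _ := by
        simp only [hu, hv]
        gcongr
        exact tsum_int_ite_add_mul_sq_rpow_neg_le hs hM hlam

lemma integral_prod_mul_comp_snd_eq_zero {α β 𝕜 : Type*} [RCLike 𝕜]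
    [MeasurableSpace α] [MeasurableSpace β] {μ : Measure α} {ν : Measure β} [SFinite μ]
    [SFinite ν] {f : α × β → 𝕜} {g : β → 𝕜} (hgf : Integrable (fun z => g z.2 * f z) (μ.prod ν))
    (hf : ∀ᵐ y ∂ν, ∫ x, f (x, y) ∂μ = 0) :
    ∫ z, g z.2 * f z ∂(μ.prod ν) = 0 := by
  rw [integral_prod_symm _ hgf]
  refine integral_eq_zero_of_ae ?_
  filter_upwards [hf] with y hy
  rw [integral_const_mul, hy, mul_zero, Pi.zero_apply]

section Characters

variable {d' d'' : ℕ}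

lemma norm_eRaw (k : ℤ × (Fin d' → ℤ) × (Fin d'' → ℤ)) (x : Tor d' d'') :
    ‖eRaw d' d'' k x‖ = 1 := by
  simp [eRaw, norm_prod, Circle.norm_coe]

lemma continuous_eRaw (k : ℤ × (Fin d' → ℤ) × (Fin d'' → ℤ)) : Continuous (eRaw d' d'' k) := by
  unfold eRaw
  fun_prop

lemma eRaw_zero_fst (k' : Fin d' → ℤ) (k'' : Fin d'' → ℤ) (x : Tor d' d'') :
    eRaw d' d'' (0, k', k'') x = eRaw d' d'' (0, k', k'') (0, x.2) := by
  simp [eRaw]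

lemma integrable_conj_eRaw_mul {φ : Tor d' d'' → ℂ} (hφ : Integrable φ)
    (k : ℤ × (Fin d' → ℤ) × (Fin d'' → ℤ)) :
    Integrable fun x => starRingEnd ℂ (eRaw d' d'' k x) * φ x :=
  hφ.bdd_mul (c := 1) (continuous_eRaw k).star.aestronglyMeasurable
    (Eventually.of_forall fun x => by rw [RCLike.norm_conj, norm_eRaw])

lemma fCoeff_zero_fst {φ : Tor d' d'' → ℂ} (hφ : Integrable φ)
    (hφ₀ : ∀ᵐ p : (Fin d' → Circ) × (Fin d'' → Circ), (∫ t : Circ, φ (t, p.1, p.2)) = 0)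
    (k' : Fin d' → ℤ) (k'' : Fin d'' → ℤ) : fCoeff d' d'' φ (0, k', k'') = 0 := by
  have hsnd : (fun x => starRingEnd ℂ (eRaw d' d'' (0, k', k'') x) * φ x) =
      fun x => starRingEnd ℂ (eRaw d' d'' (0, k', k'') (0, x.2)) * φ x :=
    funext fun x => by rw [eRaw_zero_fst]
  have hint := integrable_conj_eRaw_mul hφ (0, k', k'')
  rw [hsnd] at hint
  rw [fCoeff, hsnd]
  exact mul_eq_zero_of_right _ (integral_prod_mul_comp_snd_eq_zero
    (g := fun p => starRingEnd ℂ (eRaw d' d'' (0, k', k'') (0, p))) hint hφ₀)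

end Characters

section Trace

variable {d' d'' : ℕ}

lemma enorm_traceCoeff_le (a : ℝ) (φ : Tor d' d'' → ℂ) (kt : (Fin d' → ℤ) × (Fin d'' → ℤ)) :
    (‖traceCoeff d' d'' a φ kt‖₊ : ℝ≥0∞) ≤
      ∑' k₁ : ℤ, (‖fCoeff d' d'' φ (k₁, kt.1, kt.2)‖₊ : ℝ≥0∞) := by
  have hscalar : ‖(((√2)⁻¹ : ℝ) : ℂ)‖ₑ ≤ 1 := by
    rw [← ofReal_norm, Complex.norm_real, Real.norm_eq_abs, abs_inv,
      abs_of_nonneg (Real.sqrt_nonneg 2), ENNReal.ofReal_le_one]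
    exact inv_le_one_of_one_le₀ (Real.one_le_sqrt.mpr one_le_two)
  have hphase : ∀ k₁ : ℤ, ‖Complex.exp (π * Complex.I * k₁ * a)‖ₑ = 1 := fun k₁ => by
    rw [show (π * Complex.I * k₁ * a : ℂ) = ((π * k₁ * a : ℝ) : ℂ) * Complex.I by
      push_cast; ring, ← ofReal_norm, Complex.norm_exp_ofReal_mul_I, ENNReal.ofReal_one]
  simp only [← enorm_eq_nnnorm]
  calc ‖traceCoeff d' d'' a φ kt‖ₑ
      ≤ 1 * ∑' k₁ : ℤ,
          ‖Complex.exp (π * Complex.I * k₁ * a) * fCoeff d' d'' φ (k₁, kt.1, kt.2)‖ₑ := by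
        rw [traceCoeff, enorm_mul]
        gcongr
        exact enorm_tsum_le_tsum_enorm
    _ = ∑' k₁ : ℤ, ‖fCoeff d' d'' φ (k₁, kt.1, kt.2)‖ₑ := by
        simp only [one_mul, enorm_mul, hphase]

/-- `⟨(λ'k', λ''k'')⟩²`, the weight of the trace norm. -/
def brktTan (lam' lam'' : ℝ) (kt : (Fin d' → ℤ) × (Fin d'' → ℤ)) : ℝ :=
  1 + lam' ^ 2 * (∑ i, ((kt.1 i : ℝ)) ^ 2) + lam'' ^ 2 * ∑ j, ((kt.2 j : ℝ)) ^ 2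

lemma one_le_brktTan (lam' lam'' : ℝ) (kt : (Fin d' → ℤ) × (Fin d'' → ℤ)) :
    1 ≤ brktTan lam' lam'' kt := by
  unfold brktTan
  have : 0 ≤ lam' ^ 2 * (∑ i, ((kt.1 i : ℝ)) ^ 2) := by positivity
  have : 0 ≤ lam'' ^ 2 * ∑ j, ((kt.2 j : ℝ)) ^ 2 := by positivity
  linarith

lemma brkt_eq_brktTan_add (lam1 lam' lam'' : ℝ) (k₁ : ℤ) (kt : (Fin d' → ℤ) × (Fin d'' → ℤ)) :
    brkt d' d'' lam1 lam' lam'' (k₁, kt.1, kt.2) = brktTan lam' lam'' kt + (lam1 * k₁) ^ 2 := by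
  unfold brkt brktTan
  ring

lemma sobNormSq_eq_tsum_tsum (s lam1 lam' lam'' : ℝ) (φ : Tor d' d'' → ℂ) :
    sobNormSq d' d'' s lam1 lam' lam'' φ = ∑' kt : (Fin d' → ℤ) × (Fin d'' → ℤ), ∑' k₁ : ℤ,
      ENNReal.ofReal (brkt d' d'' lam1 lam' lam'' (k₁, kt.1, kt.2) ^ s) *
        (‖fCoeff d' d'' φ (k₁, kt.1, kt.2)‖₊ : ℝ≥0∞) ^ 2 := by
  rw [sobNormSq, ENNReal.tsum_prod', ENNReal.tsum_comm]

lemma traceNormSq_summand_le {s lam1 : ℝ} (hs : 1 / 2 < s) (hlam1 : 0 < lam1) (lam' lam'' a : ℝ)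
    {φ : Tor d' d'' → ℂ} (hφ : Integrable φ)
    (hφ₀ : ∀ᵐ p : (Fin d' → Circ) × (Fin d'' → Circ), (∫ t : Circ, φ (t, p.1, p.2)) = 0)
    (kt : (Fin d' → ℤ) × (Fin d'' → ℤ)) :
    ENNReal.ofReal (brktTan lam' lam'' kt ^ (s - 1 / 2)) *
        (‖traceCoeff d' d'' a φ kt‖₊ : ℝ≥0∞) ^ 2 ≤
      ENNReal.ofReal (traceConst s * lam1⁻¹) * ∑' k₁ : ℤ,
        ENNReal.ofReal (brkt d' d'' lam1 lam' lam'' (k₁, kt.1, kt.2) ^ s) *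
          (‖fCoeff d' d'' φ (k₁, kt.1, kt.2)‖₊ : ℝ≥0∞) ^ 2 := by
  set M := brktTan lam' lam'' kt
  have hM : 0 < M := zero_lt_one.trans_le (one_le_brktTan lam' lam'' kt)
  have hweight : M ^ (s - 1 / 2) * (traceConst s * lam1⁻¹ * M ^ (1 / 2 - s)) =
      traceConst s * lam1⁻¹ := by
    rw [show 1 / 2 - s = -(s - 1 / 2) by ring, Real.rpow_neg hM.le]
    field_simp
  calc ENNReal.ofReal (M ^ (s - 1 / 2)) * (‖traceCoeff d' d'' a φ kt‖₊ : ℝ≥0∞) ^ 2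
      ≤ ENNReal.ofReal (M ^ (s - 1 / 2)) *
          (∑' k₁ : ℤ, (‖fCoeff d' d'' φ (k₁, kt.1, kt.2)‖₊ : ℝ≥0∞)) ^ 2 := by
        gcongr
        exact enorm_traceCoeff_le a φ kt
    _ ≤ ENNReal.ofReal (M ^ (s - 1 / 2)) *
          (ENNReal.ofReal (traceConst s * lam1⁻¹ * M ^ (1 / 2 - s)) * ∑' k₁ : ℤ,
            ENNReal.ofReal ((M + (lam1 * k₁) ^ 2) ^ s) *
              (‖fCoeff d' d'' φ (k₁, kt.1, kt.2)‖₊ : ℝ≥0∞) ^ 2) := by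
        gcongr
        refine sq_tsum_le_of_apply_zero hs hM hlam1 _ ?_
        simp [fCoeff_zero_fst hφ hφ₀]
    _ = _ := by
        rw [← mul_assoc, ← ENNReal.ofReal_mul (by positivity), hweight]
        simp only [brkt_eq_brktTan_add, M]

end Trace

theorem statement18 (d' d'' : ℕ) (s : ℝ) (hs : 1 / 2 < s) :
    ∃ C : ℝ, 0 < C ∧
      ∀ lam1 lam' lam'' : ℝ, 0 < lam1 → 0 < lam' → 0 < lam'' →
        ∀ a : ℝ, ∀ φ : Tor d' d'' → ℂ, MemLp φ 2 volume →
          sobNormSq d' d'' s lam1 lam' lam'' φ ≠ ⊤ →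
          -- the partial Fourier coefficient `F_{x₁} φ(0, x', x'')` vanishes
          (∀ᵐ p : (Fin d' → Circ) × (Fin d'' → Circ),
            (∫ t : Circ, φ (t, p.1, p.2)) = 0) →
          traceNormSq d' d'' s lam' lam'' a φ ≤
            ENNReal.ofReal (C ^ 2 * lam1⁻¹) *
              sobNormSq d' d'' s lam1 lam' lam'' φ := by
  refine ⟨√(traceConst s), Real.sqrt_pos.mpr (traceConst_pos hs), ?_⟩
  intro lam1 lam' lam'' hlam1 _ _ a φ hφ _ hφ₀
  rw [Real.sq_sqrt (traceConst_pos hs).le, sobNormSq_eq_tsum_tsum, ← ENNReal.tsum_mul_left]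
  exact ENNReal.tsum_le_tsum fun kt =>
    traceNormSq_summand_le hs hlam1 lam' lam'' a (hφ.integrable one_le_two) hφ₀ kt
end
end
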